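/- arXiv:2005.09508 — 6 statements merged into one kernel-verified Lean document; each statement's English description precedes it below -/
import Mathlib

section
/- Let μ > 0 be a real constant and let θ : ℝ → ℝ be a differentiable function satisfying θ′(t) = −θ(t)² + 2μ for every t ∈ ℝ. Then θ(t)² ≤ 2μ for every t ∈ ℝ. -/
/-- Auxiliary: a globally defined Riccati solution never exceeds `√(2μ)`. -/
lemma riccati_aux (μ : ℝ) (hμ : 0 < μ) (θ : ℝ → ℝ)
    (hθ : Differentiable ℝ θ)
    (hode : ∀ t : ℝ, deriv θ t = -(θ t) ^ 2 + 2 * μ) :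
    ∀ t₀ : ℝ, θ t₀ ≤ Real.sqrt (2 * μ) := by
  intro t₀
  by_contra h
  push_neg at h
  set a : ℝ := Real.sqrt (2 * μ) with ha
  have ha2 : a ^ 2 = 2 * μ := Real.sq_sqrt (by linarith)
  have hapos : 0 < a := Real.sqrt_pos.mpr (by linarith)
  set u : ℝ → ℝ := fun t => θ t - a with hu
  have hudiff : Differentiable ℝ u := hθ.sub_const a
  have huderiv : ∀ t, deriv u t = -(u t) * (θ t + a) := by
    intro t
    have : deriv u t = deriv θ t := by
      simp [hu, deriv_sub_const]
    rw [this, hode t]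
    have := ha2
    ring_nf
    nlinarith [ha2]
  -- integrating factor: u has constant sign
  set P : ℝ → ℝ := fun t => ∫ s in t₀..t, (θ s + a) with hP
  have hcont : Continuous (fun s => θ s + a) := hθ.continuous.add continuous_const
  have hPderiv : ∀ t, HasDerivAt P (θ t + a) t := fun t =>
    (hcont.integral_hasStrictDerivAt t₀ t).hasDerivAt
  set w : ℝ → ℝ := fun t => u t * Real.exp (P t) with hw
  have hwderiv : ∀ t, HasDerivAt w 0 t := by
    intro t
    have h1 : HasDerivAt u (deriv u t) t := (hudiff t).hasDerivAt
    have h2 : HasDerivAt (fun t => Real.exp (P t)) (Real.exp (P t) * (θ t + a)) t :=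
      (hPderiv t).exp
    have h3 := h1.mul h2
    convert h3 using 1
    case e'_4 => rfl
    case e'_5 => rfl
    case e'_8 => rfl
    rw [huderiv t]
    ring
  have hwconst : ∀ t, w t = w t₀ :=
    fun t => is_const_of_deriv_eq_zero
      (fun s => (hwderiv s).differentiableAt) (fun s => (hwderiv s).deriv) t t₀
  have hu0 : 0 < u t₀ := by simp [hu]; linarith
  have hupos : ∀ t, 0 < u t := by
    intro t
    have h1 := hwconst t
    have h2 : P t₀ = 0 := by simp [hP]
    have h3 : w t₀ = u t₀ := by simp [hw, h2]
    have h4 : u t * Real.exp (P t) = u t₀ := by rw [← h3, ← h1]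
    nlinarith [Real.exp_pos (P t), hu0]
  -- reciprocal grows at least linearly backwards in time
  set ψ : ℝ → ℝ := fun t => (u t)⁻¹ - t with hψ
  have hψderiv : ∀ t, HasDerivAt ψ ((θ t + a) / u t - 1) t := by
    intro t
    have h1 : HasDerivAt u (deriv u t) t := (hudiff t).hasDerivAt
    have h2 : HasDerivAt (fun t => (u t)⁻¹) (-(deriv u t) / (u t) ^ 2) t :=
      h1.inv (ne_of_gt (hupos t))
    have h3 := h2.sub (hasDerivAt_id t)
    convert h3 using 1
    case e'_4 => rfl
    case e'_5 => rfl
    case e'_8 => rfl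
    rw [huderiv t]
    have hne := ne_of_gt (hupos t)
    field_simp
  have hψmono : Monotone ψ := by
    apply monotone_of_deriv_nonneg (fun t => (hψderiv t).differentiableAt)
    intro t
    rw [(hψderiv t).deriv]
    have h1 : θ t + a = u t + 2 * a := by simp [hu]; ring
    rw [h1, add_div, div_self (ne_of_gt (hupos t))]
    have : 0 < 2 * a / u t := div_pos (by linarith) (hupos t)
    linarith
  set t₁ : ℝ := t₀ - (u t₀)⁻¹ - 1 with ht₁
  have hinv : 0 < (u t₀)⁻¹ := inv_pos.mpr hu0
  have hle : ψ t₁ ≤ ψ t₀ := hψmono (by rw [ht₁]; linarith)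
  have h1 : (u t₁)⁻¹ - t₁ ≤ (u t₀)⁻¹ - t₀ := hle
  have h2 : 0 < (u t₁)⁻¹ := inv_pos.mpr (hupos t₁)
  simp only [ht₁] at h1
  linarith

/-- If `μ > 0` and `θ : ℝ → ℝ` is a differentiable function satisfying the
Riccati equation `θ' = -θ² + 2μ` on all of `ℝ`, then `θ(t)² ≤ 2μ` for every `t`. -/
theorem riccati_complete_solution_sq_le (μ : ℝ) (hμ : 0 < μ) (θ : ℝ → ℝ)
    (hθ : Differentiable ℝ θ)
    (hode : ∀ t : ℝ, deriv θ t = -(θ t) ^ 2 + 2 * μ) :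
    ∀ t : ℝ, (θ t) ^ 2 ≤ 2 * μ := by
  intro t
  have hub := riccati_aux μ hμ θ hθ hode t
  -- lower bound via the reflected solution
  set θ' : ℝ → ℝ := fun s => -θ (-s) with hθ'
  have hdiff : Differentiable ℝ θ' := (hθ.comp (differentiable_neg)).neg
  have hode' : ∀ s, deriv θ' s = -(θ' s) ^ 2 + 2 * μ := by
    intro s
    have h1 : deriv (fun s => θ (-s)) s = -deriv θ (-s) := by
      simpa using deriv_comp_neg θ s
    have h2 : deriv θ' s = -(deriv (fun s => θ (-s)) s) := by
      simp only [hθ']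
      exact deriv.neg
    rw [h2, h1, hode (-s)]
    simp [hθ']
  have hlb := riccati_aux μ hμ θ' hdiff hode' (-t)
  simp only [hθ', neg_neg] at hlb
  have ha2 : (Real.sqrt (2 * μ)) ^ 2 = 2 * μ := Real.sq_sqrt (by linarith)
  nlinarith [hlb, hub]
end

section
/- Let μ > 0 be a real constant and let θ : ℝ → ℝ be a differentiable function satisfying θ′(t) = −θ(t)² + 2μ for every t ∈ ℝ. If θ is not identically equal to −√(2μ), then θ(t) → √(2μ) as t → +∞. -/
open Filter

/-- Auxiliary: a differentiable solution of a linear ODE `u' = k·u` with continuous `k`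
has the explicit exponential form, hence preserves its sign. -/
lemma linear_ode_exp_form (u k : ℝ → ℝ) (hu : Differentiable ℝ u) (hk : Continuous k)
    (h : ∀ t, deriv u t = k t * u t) :
    ∀ t, u t = u 0 * Real.exp (∫ s in (0:ℝ)..t, k s) := by
  set K : ℝ → ℝ := fun t => ∫ s in (0:ℝ)..t, k s with hKdef
  have hKd : ∀ t, HasDerivAt K (k t) t := fun t =>
    (hk.integral_hasStrictDerivAt 0 t).hasDerivAt
  set F : ℝ → ℝ := fun t => u t * Real.exp (-(K t)) with hFdef
  have hFd : ∀ t, HasDerivAt F (deriv u t * Real.exp (-(K t)) +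
      u t * (Real.exp (-(K t)) * (-(k t)))) t := by
    intro t
    exact ((hu t).hasDerivAt).mul (((hKd t).neg).exp)
  have hF0 : ∀ t, deriv F t = 0 := by
    intro t
    rw [(hFd t).deriv, h t]
    ring
  have hFdiff : Differentiable ℝ F := fun t => (hFd t).differentiableAt
  have hconst : ∀ t, F t = F 0 := fun t => is_const_of_deriv_eq_zero hFdiff hF0 t 0
  intro t
  have h0 : K 0 = 0 := intervalIntegral.integral_same
  have := hconst t
  simp only [hFdef, h0, neg_zero, Real.exp_zero, mul_one] at this
  have hexp : Real.exp (-(K t)) ≠ 0 := Real.exp_ne_zero _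
  have : u t = u 0 / Real.exp (-(K t)) := by
    field_simp at this ⊢
    linarith [this]
  rw [this, Real.exp_neg]
  field_simp
  rfl

/-- If `μ > 0` and `θ : ℝ → ℝ` is a globally defined differentiable solution of
the Riccati equation `θ' = -θ² + 2μ` which is not identically equal to `-√(2μ)`, then
`θ(t) → √(2μ)` as `t → +∞`. -/
theorem riccati_complete_solution_tendsto (μ : ℝ) (hμ : 0 < μ) (θ : ℝ → ℝ)
    (hθ : Differentiable ℝ θ)
    (hode : ∀ t : ℝ, deriv θ t = -(θ t) ^ 2 + 2 * μ)
    (hne : ¬ ∀ t : ℝ, θ t = -Real.sqrt (2 * μ)) :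
    Tendsto θ atTop (nhds (Real.sqrt (2 * μ))) := by
  set a : ℝ := Real.sqrt (2 * μ) with hadef
  have ha2 : a ^ 2 = 2 * μ := Real.sq_sqrt (by linarith)
  have ha0 : 0 < a := Real.sqrt_pos.2 (by linarith)
  have hθc : Continuous θ := hθ.continuous
  -- exponential form for θ - a
  have hminus : ∀ t, θ t - a = (θ 0 - a) * Real.exp (∫ s in (0:ℝ)..t, -(θ s + a)) := by
    apply linear_ode_exp_form (fun t => θ t - a) (fun t => -(θ t + a))
      (hθ.sub_const a) ((hθc.add continuous_const).neg)
    intro t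
    have : deriv (fun t => θ t - a) t = deriv θ t := by
      simp [deriv_sub_const]
    rw [this, hode t]
    nlinarith [ha2]
  -- exponential form for θ + a
  have hplus : ∀ t, θ t + a = (θ 0 + a) * Real.exp (∫ s in (0:ℝ)..t, -(θ s - a)) := by
    apply linear_ode_exp_form (fun t => θ t + a) (fun t => -(θ t - a))
      (hθ.add_const a) ((hθc.sub continuous_const).neg)
    intro t
    have : deriv (fun t => θ t + a) t = deriv θ t := by
      simp [deriv_add_const]
    rw [this, hode t]
    nlinarith [ha2]
  -- case analysis on θ 0
  rcases lt_trichotomy (θ 0) (-a) with hlo | hlo | hlo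
  · -- θ 0 < -a : θ t + a < 0 everywhere, finite-time blow-up contradiction
    exfalso
    have hneg : ∀ t, θ t + a < 0 := by
      intro t
      rw [hplus t]
      exact mul_neg_of_neg_of_pos (by linarith) (Real.exp_pos _)
    set g : ℝ → ℝ := fun t => (θ t + a)⁻¹ - t with hgdef
    have hgd : ∀ t, HasDerivAt g (-(deriv θ t) / (θ t + a) ^ 2 - 1) t := by
      intro t
      exact (((hθ t).hasDerivAt.add_const a).inv (by linarith [hneg t])).sub (hasDerivAt_id t)
    have hgd' : ∀ t, 0 ≤ deriv g t := by
      intro t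
      rw [(hgd t).deriv, hode t]
      have hv : θ t + a < 0 := hneg t
      have hv2 : (0:ℝ) < (θ t + a) ^ 2 := by nlinarith
      rw [div_sub_one hv2.ne', le_div_iff₀ hv2]
      nlinarith [ha2, hv, ha0]
    have hmono : Monotone g := monotone_of_deriv_nonneg
      (fun t => (hgd t).differentiableAt) hgd'
    have h1 := hmono (show (0:ℝ) ≤ 1 - (θ 0 + a)⁻¹ by
      have : (θ 0 + a)⁻¹ < 0 := inv_lt_zero.2 (hneg 0)
      linarith)
    have h2 : (θ (1 - (θ 0 + a)⁻¹) + a)⁻¹ < 0 := inv_lt_zero.2 (hneg _)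
    simp only [hgdef] at h1
    linarith
  · -- θ 0 = -a : contradicts hne
    exfalso
    apply hne
    intro t
    have := hplus t
    rw [hlo] at this
    simp at this
    linarith [this]
  rcases lt_trichotomy (θ 0) a with hhi | hhi | hhi
  · -- -a < θ 0 < a : θ increases to a
    have hlt : ∀ t, θ t < a := by
      intro t
      have := hminus t
      nlinarith [mul_neg_of_neg_of_pos (show θ 0 - a < 0 by linarith)
        (Real.exp_pos (∫ s in (0:ℝ)..t, -(θ s + a)))]
    have hgt : ∀ t, -a < θ t := by
      intro t
      have := hplus t
      nlinarith [mul_pos (show 0 < θ 0 + a by linarith)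
        (Real.exp_pos (∫ s in (0:ℝ)..t, -(θ s - a)))]
    have hmono : Monotone θ := by
      apply StrictMono.monotone
      apply strictMono_of_deriv_pos
      intro t
      rw [hode t]
      nlinarith [hlt t, hgt t, ha2]
    have hbdd : BddAbove (Set.range θ) := ⟨a, by rintro x ⟨t, rfl⟩; exact (hlt t).le⟩
    have htend : Tendsto θ atTop (nhds (⨆ t, θ t)) := tendsto_atTop_ciSup hmono hbdd
    set L : ℝ := ⨆ t, θ t with hLdef
    have hLle : L ≤ a := ciSup_le fun t => (hlt t).le
    have hθleL : ∀ t, θ t ≤ L := fun t => le_ciSup hbdd t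
    have hLeq : L = a := by
      by_contra hLa
      have hLlt : L < a := lt_of_le_of_ne hLle hLa
      set b : ℝ := max L (-(θ 0)) with hbdef
      have hb1 : b < a := max_lt hLlt (by linarith)
      have hb0 : 0 ≤ b := by
        have h1 : θ 0 ≤ L := hθleL 0
        rcases le_or_gt 0 L with h | h
        · exact le_trans h (le_max_left _ _)
        · exact le_trans (by linarith) (le_max_right _ _)
      set δ : ℝ := a ^ 2 - b ^ 2 with hδdef
      have hδ0 : 0 < δ := by
        simp only [hδdef]
        nlinarith [hb1, hb0]
      -- for t ≥ 0, θ t ^ 2 ≤ b ^ 2, so deriv θ t ≥ δ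
      have hsq : ∀ t, 0 ≤ t → θ t ^ 2 ≤ b ^ 2 := by
        intro t ht
        have h1 : θ 0 ≤ θ t := hmono ht
        have h2 : θ t ≤ L := hθleL t
        have hle : θ t ≤ b := le_trans h2 (le_max_left _ _)
        have hge : -b ≤ θ t := by
          have : -(θ 0) ≤ b := le_max_right _ _
          linarith
        exact sq_le_sq' hge hle
      set ψ : ℝ → ℝ := fun t => θ t - δ * t with hψdef
      have hψmono : MonotoneOn ψ (Set.Ici 0) := by
        apply monotoneOn_of_deriv_nonneg (convex_Ici 0)
        · exact (hθc.sub (continuous_const.mul continuous_id)).continuousOn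
        · exact ((hθ.sub ((differentiable_const δ).mul differentiable_id)).differentiableOn)
        · intro t ht
          rw [interior_Ici] at ht
          have hd : deriv ψ t = deriv θ t - δ := by
            have : HasDerivAt ψ (deriv θ t - δ * 1) t :=
              (hθ t).hasDerivAt.sub ((hasDerivAt_id t).const_mul δ)
            simpa using this.deriv
          rw [hd, hode t]
          have := hsq t (le_of_lt ht)
          simp only [hδdef]
          nlinarith [ha2]
      -- pick large t to contradict θ t < a
      set T : ℝ := (a - θ 0) / δ + 1 with hTdef
      have hT0 : (0:ℝ) ≤ T := by
        have : 0 ≤ (a - θ 0) / δ := div_nonneg (by linarith) hδ0.le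
        simp only [hTdef]; linarith
      have := hψmono (Set.self_mem_Ici) (Set.mem_Ici.2 hT0) hT0
      simp only [hψdef, mul_zero, sub_zero, hTdef] at this
      have hcalc : δ * ((a - θ 0) / δ + 1) = (a - θ 0) + δ := by
        field_simp
      have := hlt T
      simp only [hTdef] at this
      nlinarith [hψmono (Set.self_mem_Ici) (Set.mem_Ici.2 hT0) hT0, hcalc]
    rw [← hLeq]
    exact htend
  · -- θ 0 = a : θ is identically a
    have : ∀ t, θ t = a := by
      intro t
      have := hminus t
      rw [hhi] at this
      simp at this
      linarith [this]
    have : θ = fun _ => a := funext this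
    rw [this]
    exact tendsto_const_nhds
  · -- θ 0 > a : θ t > a everywhere, backward blow-up contradiction
    exfalso
    have hpos : ∀ t, 0 < θ t - a := by
      intro t
      rw [hminus t]
      exact mul_pos (by linarith) (Real.exp_pos _)
    set g : ℝ → ℝ := fun t => (θ t - a)⁻¹ - t with hgdef
    have hgd : ∀ t, HasDerivAt g (-(deriv θ t) / (θ t - a) ^ 2 - 1) t := by
      intro t
      exact (((hθ t).hasDerivAt.sub_const a).inv (by linarith [hpos t])).sub (hasDerivAt_id t)
    have hgd' : ∀ t, 0 ≤ deriv g t := by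
      intro t
      rw [(hgd t).deriv, hode t]
      have hv : 0 < θ t - a := hpos t
      have hv2 : (0:ℝ) < (θ t - a) ^ 2 := by nlinarith
      rw [div_sub_one hv2.ne', le_div_iff₀ hv2]
      nlinarith [ha2, hv, ha0]
    have hmono : Monotone g := monotone_of_deriv_nonneg
      (fun t => (hgd t).differentiableAt) hgd'
    set s : ℝ := -((θ 0 - a)⁻¹) - 1 with hsdef
    have hs0 : s ≤ 0 := by
      have : 0 < (θ 0 - a)⁻¹ := inv_pos.2 (hpos 0)
      simp only [hsdef]; linarith
    have h1 := hmono hs0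
    have h2 : 0 < (θ s - a)⁻¹ := inv_pos.2 (hpos s)
    simp only [hgdef, hsdef] at h1 h2
    linarith
end

section
/- Let μ > 0 be a real constant, let θ : ℝ → ℝ be differentiable with θ′(t) = −θ(t)² + 2μ for every t ∈ ℝ, and let φ : ℝ → ℝ be differentiable with φ′(t) = −θ(t)·φ(t) for every t ∈ ℝ. Then there is no constant c > 0 such that |φ(t)| ≥ c for all t ∈ ℝ; equivalently, the infimum of |φ| over ℝ is 0. -/
/-- A bounded global solution of `ψ' = b ψ` with `b ≠ 0` vanishes. -/
lemma aux_bounded_exp_sol_zero (b M : ℝ) (hb : b ≠ 0) (ψ : ℝ → ℝ)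
    (hψ : Differentiable ℝ ψ) (hd : ∀ t, deriv ψ t = b * ψ t)
    (hM : ∀ t, ψ t ^ 2 ≤ M) : ψ 0 = 0 := by
  have hg : ∀ t : ℝ, HasDerivAt (fun t => ψ t * Real.exp (-(b * t))) 0 t := by
    intro t
    have hψt : HasDerivAt ψ (b * ψ t) t := (hd t) ▸ (hψ t).hasDerivAt
    have hlin : HasDerivAt (fun t : ℝ => -(b * t)) (-b) t := by
      have := ((hasDerivAt_id t).const_mul b).neg
      simp only [id, mul_one] at this
      exact this
    have he : HasDerivAt (fun t : ℝ => Real.exp (-(b * t))) (Real.exp (-(b * t)) * (-b)) t :=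
      hlin.exp
    have : HasDerivAt (fun t => ψ t * Real.exp (-(b * t))) _ t := hψt.mul he
    convert this using 1
    ring
  have hconst : ∀ t : ℝ, ψ t * Real.exp (-(b * t)) = ψ 0 := by
    intro t
    have := is_const_of_deriv_eq_zero (f := fun t => ψ t * Real.exp (-(b * t)))
      (fun x => (hg x).differentiableAt) (fun x => (hg x).deriv) t 0
    simpa using this
  have hsol : ∀ t : ℝ, ψ t = ψ 0 * Real.exp (b * t) := by
    intro t
    have h := hconst t
    have hpos : Real.exp (-(b * t)) ≠ 0 := (Real.exp_pos _).ne'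
    field_simp [Real.exp_neg] at h ⊢
    rw [← h, mul_assoc, ← Real.exp_add, neg_add_cancel, Real.exp_zero, mul_one]
  by_contra h0
  have hψ0 : 0 < ψ 0 ^ 2 := by positivity
  set t₀ : ℝ := (M / ψ 0 ^ 2) / (2 * b) with ht₀
  have hbt : 2 * (b * t₀) = M / ψ 0 ^ 2 := by
    rw [ht₀]
    field_simp
  have h1 : ψ t₀ ^ 2 = ψ 0 ^ 2 * Real.exp (2 * (b * t₀)) := by
    rw [hsol t₀, mul_pow, sq (Real.exp _), ← Real.exp_add]
    ring_nf
  have h2 := hM t₀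
  rw [h1, hbt] at h2
  have h3 : M / ψ 0 ^ 2 + 1 ≤ Real.exp (M / ψ 0 ^ 2) := Real.add_one_le_exp _
  have h4 : ψ 0 ^ 2 * (M / ψ 0 ^ 2 + 1) ≤ M := by
    calc ψ 0 ^ 2 * (M / ψ 0 ^ 2 + 1) ≤ ψ 0 ^ 2 * Real.exp (M / ψ 0 ^ 2) := by
          exact mul_le_mul_of_nonneg_left h3 (le_of_lt hψ0)
      _ ≤ M := h2
  have h5 : ψ 0 ^ 2 * (M / ψ 0 ^ 2) = M := by field_simp
  nlinarith [h4, h5, hψ0]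

lemma aux_not_bounded_away (μ : ℝ) (hμ : 0 < μ)
    (θ φ : ℝ → ℝ) (hθ : Differentiable ℝ θ) (hφ : Differentiable ℝ φ)
    (hodeθ : ∀ t : ℝ, deriv θ t = -(θ t) ^ 2 + 2 * μ)
    (hodeφ : ∀ t : ℝ, deriv φ t = -(θ t) * φ t) :
    ¬ ∃ c : ℝ, 0 < c ∧ ∀ t : ℝ, c ≤ |φ t| := by
  rintro ⟨c, hc, hbound⟩
  have hφ0 : ∀ t, φ t ≠ 0 := by
    intro t h
    have := hbound t
    rw [h, abs_zero] at this
    linarith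
  set a := Real.sqrt (2 * μ) with ha_def
  have ha2 : a ^ 2 = 2 * μ := Real.sq_sqrt (by linarith)
  have ha0 : 0 < a := Real.sqrt_pos.mpr (by linarith)
  set u : ℝ → ℝ := fun t => (φ t)⁻¹ with hu_def
  have hu : Differentiable ℝ u := hφ.inv hφ0
  have hu' : ∀ t, deriv u t = θ t * u t := by
    intro t
    have h : deriv u t = -deriv φ t / φ t ^ 2 := deriv_inv'' (hφ t) (hφ0 t)
    rw [h, hodeφ t, hu_def]
    simp only
    rw [pow_two, neg_mul, neg_neg, mul_comm (θ t) (φ t), mul_div_mul_left _ _ (hφ0 t),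
      div_eq_mul_inv, mul_comm]
  have huB : ∀ t, u t ^ 2 ≤ 1 / c ^ 2 := by
    intro t
    have h1 : c ≤ |φ t| := hbound t
    have h2 : c ^ 2 ≤ φ t ^ 2 := by nlinarith [abs_nonneg (φ t), sq_abs (φ t)]
    have h3 : (0:ℝ) < c ^ 2 := by positivity
    have h4 : u t ^ 2 = 1 / φ t ^ 2 := by
      rw [hu_def]; simp [inv_pow, one_div]
    rw [h4]
    exact one_div_le_one_div_of_le h3 h2
  set K : ℝ := (θ 0 ^ 2 - 2 * μ) * u 0 ^ 2 with hK_def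
  -- conserved energy
  have hE : ∀ t, (θ t ^ 2 - 2 * μ) * u t ^ 2 = K := by
    intro t
    refine is_const_of_deriv_eq_zero (f := fun t => (θ t ^ 2 - 2 * μ) * u t ^ 2) ?_ ?_ t 0
    · exact ((hθ.pow 2).sub_const (2 * μ)).mul (hu.pow 2)
    · intro x
      have h1 : HasDerivAt (fun t => θ t ^ 2 - 2 * μ)
          ((2:ℕ) * θ x ^ 1 * deriv θ x) x := ((hθ x).hasDerivAt.pow 2).sub_const (2 * μ)
      have h2 : HasDerivAt (fun t => u t ^ 2) ((2:ℕ) * u x ^ 1 * deriv u x) x :=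
        (hu x).hasDerivAt.pow 2
      rw [(show deriv (fun t => (θ t ^ 2 - 2 * μ) * u t ^ 2) x = _ from (h1.mul h2).deriv), hodeθ x, hu' x]
      push_cast
      ring
  set M : ℝ := 2 * K + 8 * μ / c ^ 2 with hM_def
  -- v = (θ + a) u satisfies v' = a v
  set v : ℝ → ℝ := fun t => (θ t + a) * u t with hv_def
  have hv : Differentiable ℝ v := (hθ.add_const a).mul hu
  have hv' : ∀ t, deriv v t = a * v t := by
    intro t
    have h1 : HasDerivAt (fun s => θ s + a) (deriv θ t) t := (hθ t).hasDerivAt.add_const a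
    rw [(show deriv v t = _ from (h1.mul (hu t).hasDerivAt).deriv), hodeθ t, hu' t, hv_def]
    simp only
    linear_combination (-(u t)) * ha2
  set w : ℝ → ℝ := fun t => (θ t - a) * u t with hw_def
  have hw : Differentiable ℝ w := (hθ.sub_const a).mul hu
  have hw' : ∀ t, deriv w t = -a * w t := by
    intro t
    have h1 : HasDerivAt (fun s => θ s - a) (deriv θ t) t := (hθ t).hasDerivAt.sub_const a
    rw [(show deriv w t = _ from (h1.mul (hu t).hasDerivAt).deriv), hodeθ t, hu' t, hw_def]
    simp only
    linear_combination (-(u t)) * ha2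
  clear_value a u K M v w
  have hmul : (0:ℝ) ≤ 8 * μ := by linarith
  have hvB : ∀ t, v t ^ 2 ≤ M := by
    intro t
    have hE' := hE t
    have hub := mul_le_mul_of_nonneg_left (huB t) hmul
    have hsq := sq_nonneg ((θ t - a) * u t)
    have hau : a ^ 2 * u t ^ 2 = 2 * μ * u t ^ 2 := by rw [ha2]
    have hvt : v t = (θ t + a) * u t := by rw [hv_def]
    rw [hvt]
    have e1 : ((θ t + a) * u t) ^ 2 + ((θ t - a) * u t) ^ 2
        = 2 * ((θ t ^ 2 - 2 * μ) * u t ^ 2) + 2 * (a ^ 2 * u t ^ 2) + 4 * (μ * u t ^ 2) := by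
      ring
    have e2 : (8:ℝ) * μ / c ^ 2 = 8 * μ * (1 / c ^ 2) := by ring
    linarith [hsq, hub, hau, hE', hM_def]
  have hwB : ∀ t, w t ^ 2 ≤ M := by
    intro t
    have hE' := hE t
    have hub := mul_le_mul_of_nonneg_left (huB t) hmul
    have hsq := sq_nonneg ((θ t + a) * u t)
    have hau : a ^ 2 * u t ^ 2 = 2 * μ * u t ^ 2 := by rw [ha2]
    have hwt : w t = (θ t - a) * u t := by rw [hw_def]
    rw [hwt]
    have e1 : ((θ t + a) * u t) ^ 2 + ((θ t - a) * u t) ^ 2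
        = 2 * ((θ t ^ 2 - 2 * μ) * u t ^ 2) + 2 * (a ^ 2 * u t ^ 2) + 4 * (μ * u t ^ 2) := by
      ring
    have e2 : (8:ℝ) * μ / c ^ 2 = 8 * μ * (1 / c ^ 2) := by ring
    linarith [hsq, hub, hau, hE', hM_def]
  have hv0 : v 0 = 0 := aux_bounded_exp_sol_zero a M ha0.ne' v hv hv' hvB
  have hw0 : w 0 = 0 := aux_bounded_exp_sol_zero (-a) M (neg_ne_zero.mpr ha0.ne') w hw hw' hwB
  have hv0' : (θ 0 + a) * u 0 = 0 := by rw [hv_def] at hv0; simpa using hv0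
  have hw0' : (θ 0 - a) * u 0 = 0 := by rw [hw_def] at hw0; simpa using hw0
  have h2a : 2 * a * u 0 = 0 := by linear_combination hv0' - hw0'
  have hu0 : u 0 = 0 := by
    rcases mul_eq_zero.mp h2a with h | h
    · exact absurd h (by positivity)
    · exact h
  rw [hu_def] at hu0
  exact (inv_ne_zero (hφ0 0)) (by simpa using hu0)

/-- If `μ > 0`, `θ` is a global differentiable solution of `θ' = -θ² + 2μ`, and
`φ` is a global differentiable solution of `φ' = -θ·φ`, then `|φ|` cannot be bounded away
from `0`: there is no constant `c > 0` with `|φ(t)| ≥ c` for all `t`. Equivalently, the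
infimum of `|φ|` over `ℝ` is `0`. -/
theorem riccati_linear_companion_not_bounded_away (μ : ℝ) (hμ : 0 < μ)
    (θ φ : ℝ → ℝ) (hθ : Differentiable ℝ θ) (hφ : Differentiable ℝ φ)
    (hodeθ : ∀ t : ℝ, deriv θ t = -(θ t) ^ 2 + 2 * μ)
    (hodeφ : ∀ t : ℝ, deriv φ t = -(θ t) * φ t) :
    (¬ ∃ c : ℝ, 0 < c ∧ ∀ t : ℝ, c ≤ |φ t|) ∧
    (⨅ t : ℝ, |φ t|) = 0 := by
  have h1 : ¬ ∃ c : ℝ, 0 < c ∧ ∀ t : ℝ, c ≤ |φ t| :=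
    aux_not_bounded_away μ hμ θ φ hθ hφ hodeθ hodeφ
  refine ⟨h1, ?_⟩
  have hbdd : BddBelow (Set.range fun t : ℝ => |φ t|) := by
    refine ⟨0, ?_⟩
    rintro x ⟨t, rfl⟩
    exact abs_nonneg _
  refine le_antisymm ?_ (le_ciInf fun t => abs_nonneg _)
  by_contra h
  push_neg at h
  exact h1 ⟨⨅ t : ℝ, |φ t|, h, fun t => ciInf_le hbdd t⟩
end

section
/- Let μ < 0 be a real constant. Then there is no differentiable function θ : ℝ → ℝ satisfying θ′(t) = −θ(t)² + 2μ for every t ∈ ℝ. -/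
/-- If `μ < 0`, the Riccati equation `θ' = -θ² + 2μ` has no globally defined
(complete) differentiable solution `θ : ℝ → ℝ`. -/
theorem riccati_mu_neg_no_complete_solution (μ : ℝ) (hμ : μ < 0) :
    ¬ ∃ θ : ℝ → ℝ, Differentiable ℝ θ ∧
      ∀ t : ℝ, deriv θ t = -(θ t) ^ 2 + 2 * μ := by
  rintro ⟨θ, hθ, hode⟩
  -- derivative is at most 2μ everywhere
  have hle : ∀ x : ℝ, deriv θ x ≤ 2 * μ := by
    intro x
    rw [hode x]
    nlinarith [sq_nonneg (θ x)]
  have hmvt := image_sub_le_mul_sub_of_deriv_le hθ hle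
  -- find t₀ ≥ 0 with θ t₀ ≤ -1
  set t₀ : ℝ := max 0 ((1 + θ 0) / (-(2 * μ))) with ht₀def
  have h2μ : (0:ℝ) < -(2 * μ) := by linarith
  have ht₀0 : (0:ℝ) ≤ t₀ := le_max_left _ _
  have ht₀1 : (1 + θ 0) / (-(2 * μ)) ≤ t₀ := le_max_right _ _
  have hθt₀ : θ t₀ ≤ -1 := by
    have h1 := hmvt ht₀0
    have h2 : 1 + θ 0 ≤ t₀ * -(2 * μ) := (div_le_iff₀ h2μ).mp ht₀1
    nlinarith
  -- θ t ≤ -1 for all t ≥ t₀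
  have hneg : ∀ t, t₀ ≤ t → θ t ≤ -1 := by
    intro t ht
    have h1 := hmvt ht
    nlinarith
  -- consider φ = 1/θ on [t₀, ∞)
  set φ : ℝ → ℝ := fun t => (θ t)⁻¹ with hφdef
  have hderiv : ∀ t, t₀ ≤ t → HasDerivAt φ (-(deriv θ t) / (θ t) ^ 2) t := by
    intro t ht
    have hne : θ t ≠ 0 := by
      have := hneg t ht
      intro h; rw [h] at this; linarith
    exact ((hθ t).hasDerivAt.inv hne)
  have hderiv_ge : ∀ t ∈ interior (Set.Ici t₀), (1:ℝ) ≤ deriv φ t := by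
    intro t ht
    rw [interior_Ici, Set.mem_Ioi] at ht
    have h := (hderiv t ht.le).deriv
    rw [h, hode t]
    have h1 : θ t ≤ -1 := hneg t ht.le
    have hsq : (1:ℝ) ≤ (θ t) ^ 2 := by nlinarith
    have hpos : (0:ℝ) < θ t ^ 2 := by nlinarith
    rw [le_div_iff₀ hpos]
    nlinarith
  have hφcont : ContinuousOn φ (Set.Ici t₀) := by
    intro t ht
    exact ((hderiv t ht).continuousAt).continuousWithinAt
  have hφdiff : DifferentiableOn ℝ φ (interior (Set.Ici t₀)) := by
    intro t ht
    rw [interior_Ici, Set.mem_Ioi] at ht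
    exact ((hderiv t ht.le).differentiableAt).differentiableWithinAt
  have key := (convex_Ici t₀).mul_sub_le_image_sub_of_le_deriv hφcont hφdiff hderiv_ge
    t₀ Set.self_mem_Ici (t₀ + 2) (by simp) (by linarith)
  -- bounds on φ: φ t ∈ [-1, 0)
  have hφbound : ∀ t, t₀ ≤ t → -1 ≤ φ t ∧ φ t < 0 := by
    intro t ht
    have h1 : θ t ≤ -1 := hneg t ht
    constructor
    · have hne : θ t ≠ 0 := by intro h; rw [h] at h1; linarith
      have := mul_inv_cancel₀ hne
      nlinarith [inv_lt_zero.mpr (show θ t < 0 by linarith)]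
    · exact inv_lt_zero.mpr (by linarith)
  have hb1 := hφbound t₀ le_rfl
  have hb2 := hφbound (t₀ + 2) (by linarith)
  have : (1:ℝ) * (t₀ + 2 - t₀) ≤ φ (t₀ + 2) - φ t₀ := key
  linarith
end

section
/- Let μ > 0 and c > 0 be real constants, and let θ, H, φ : ℝ → ℝ be differentiable functions satisfying, for every t ∈ ℝ: θ′(t) = 2H(t) − θ(t)² + 2μ, H′(t) = −θ(t)·H(t), φ′(t) = −θ(t)·φ(t), and |φ(t)| ≥ c. Then θ(t) = 0 and H(t) = −μ for all t ∈ ℝ. -/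
lemma exp_growth_zero (a A C : ℝ) (ha : 0 < a) (hA : 0 ≤ A)
    (h : ∀ t : ℝ, 0 ≤ t → A * Real.exp (a * t) ≤ C) : A = 0 := by
  by_contra hA0
  have hApos : 0 < A := lt_of_le_of_ne hA (Ne.symm hA0)
  have hC : A ≤ C := by simpa using h 0 le_rfl
  have hr : (1:ℝ) ≤ C / A + 1 := by
    have : 0 ≤ C / A := div_nonneg (hApos.le.trans hC) hApos.le
    linarith
  set t := Real.log (C / A + 1) / a with ht
  have htpos : 0 ≤ t := div_nonneg (Real.log_nonneg hr) ha.le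
  have hat : a * t = Real.log (C / A + 1) := by
    rw [ht]; field_simp
  have hexp : Real.exp (a * t) = C / A + 1 := by
    rw [hat]; exact Real.exp_log (by linarith)
  have h2 := h t htpos
  rw [hexp] at h2
  have h3 : A * (C / A + 1) = C + A := by field_simp
  linarith

lemma ode_exp_sol (a : ℝ) (v : ℝ → ℝ) (hv : ∀ t, HasDerivAt v (a * v t) t) :
    ∀ t, v t = v 0 * Real.exp (a * t) := by
  have hg : ∀ t, HasDerivAt (fun s => v s * Real.exp (-a * s)) 0 t := by
    intro t
    have he : HasDerivAt (fun s : ℝ => Real.exp (-a * s)) (Real.exp (-a * t) * (-a)) t := by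
      simpa using ((hasDerivAt_id t).const_mul (-a)).exp
    have := (hv t).mul he
    refine this.congr_deriv (Eq.symm ?_)
    ring
  have hconst : ∀ t, v t * Real.exp (-a * t) = v 0 * Real.exp (-a * 0) := by
    intro t
    exact is_const_of_deriv_eq_zero (fun x => (hg x).differentiableAt)
      (fun x => (hg x).deriv) t 0
  intro t
  have h := hconst t
  rw [neg_mul, Real.exp_neg] at h
  simp at h
  have hne : Real.exp (a * t) ≠ 0 := Real.exp_ne_zero _
  field_simp at h
  linarith

/-- For `μ > 0` and `c > 0`, if `θ, H, φ : ℝ → ℝ` are differentiable and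
satisfy `θ' = 2H - θ² + 2μ`, `H' = -θH`, `φ' = -θφ`, and `|φ| ≥ c` everywhere, then
`θ ≡ 0` and `H ≡ -μ`. -/
theorem ode_system_mu_pos (μ c : ℝ) (hμ : 0 < μ) (hc : 0 < c)
    (θ H φ : ℝ → ℝ)
    (hθ : Differentiable ℝ θ) (hH : Differentiable ℝ H) (hφ : Differentiable ℝ φ)
    (hodeθ : ∀ t : ℝ, deriv θ t = 2 * H t - (θ t) ^ 2 + 2 * μ)
    (hodeH : ∀ t : ℝ, deriv H t = -(θ t) * H t)
    (hodeφ : ∀ t : ℝ, deriv φ t = -(θ t) * φ t)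
    (hφc : ∀ t : ℝ, c ≤ |φ t|) :
    ∀ t : ℝ, θ t = 0 ∧ H t = -μ := by
  have hφne : ∀ t, φ t ≠ 0 := by
    intro t h
    have := hφc t
    rw [h, abs_zero] at this
    linarith
  set a := Real.sqrt (2*μ) with ha
  have ha2 : a ^ 2 = 2 * μ := Real.sq_sqrt (by linarith)
  have hapos : 0 < a := Real.sqrt_pos.mpr (by linarith)
  set y := fun t => (φ t)⁻¹ with hydef
  have hy' : ∀ t, HasDerivAt y (θ t * y t) t := by
    intro t
    have h0 := ((hφ t).hasDerivAt).inv (hφne t)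
    rw [hodeφ t] at h0
    refine h0.congr_deriv (Eq.symm ?_)
    have := hφne t
    field_simp [hydef]
    show θ t * (φ t)⁻¹ * φ t = θ t
    field_simp
  set k := H 0 * y 0 with hkdef
  have hHy : ∀ t, H t * y t = k := by
    have hP : ∀ s, HasDerivAt (fun u => H u * y u) 0 s := by
      intro s
      have h0 := ((hH s).hasDerivAt).mul (hy' s)
      rw [hodeH s] at h0
      refine h0.congr_deriv (Eq.symm ?_)
      ring
    intro t
    exact is_const_of_deriv_eq_zero (fun x => (hP x).differentiableAt)
      (fun x => (hP x).deriv) t 0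
  set z := fun t => y t + k / μ with hzdef
  have hz' : ∀ t, HasDerivAt z (θ t * y t) t := fun t => (hy' t).add_const _
  set zd := fun t => θ t * y t with hzddef
  have hzd' : ∀ t, HasDerivAt zd (a ^ 2 * z t) t := by
    intro t
    have hθd := (hθ t).hasDerivAt
    rw [hodeθ t] at hθd
    have h0 := hθd.mul (hy' t)
    refine h0.congr_deriv (Eq.symm ?_)
    rw [ha2]
    have h1 := hHy t
    have hzt : z t = y t + k / μ := rfl
    rw [hzt]
    have hμ' : (μ:ℝ) ≠ 0 := ne_of_gt hμ
    field_simp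
    nlinarith [h1]
  set v := fun t => zd t + a * z t with hvdef
  set w := fun t => zd t - a * z t with hwdef
  have hv' : ∀ t, HasDerivAt v (a * v t) t := by
    intro t
    have h0 := (hzd' t).add ((hz' t).const_mul a)
    refine h0.congr_deriv (Eq.symm ?_)
    show a * (zd t + a * z t) = a ^ 2 * z t + a * (θ t * y t)
    rw [hzddef]; ring
  have hw' : ∀ t, HasDerivAt w (-a * w t) t := by
    intro t
    have h0 := (hzd' t).sub ((hz' t).const_mul a)
    refine h0.congr_deriv (Eq.symm ?_)
    show -a * (zd t - a * z t) = a ^ 2 * z t - a * (θ t * y t)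
    rw [hzddef]; ring
  have hvsol := ode_exp_sol a v hv'
  have hwsol := ode_exp_sol (-a) w hw'
  -- bound on z
  set M := c⁻¹ + |k| / μ with hMdef
  have hyb : ∀ t, |y t| ≤ c⁻¹ := by
    intro t
    rw [hydef]
    simp only [abs_inv]
    exact inv_anti₀ hc (hφc t)
  have hzb : ∀ t, |z t| ≤ M := by
    intro t
    have : |z t| ≤ |y t| + |k / μ| := abs_add_le _ _
    rw [abs_div, abs_of_pos hμ] at this
    have := this.trans (add_le_add_left (hyb t) _)
    exact this
  have hMnn : 0 ≤ M := le_trans (abs_nonneg _) (hzb 0)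
  have hvw : ∀ t, v t - w t = 2 * a * z t := by
    intro t
    show zd t + a * z t - (zd t - a * z t) = 2 * a * z t
    ring
  have hv0 : v 0 = 0 := by
    have := exp_growth_zero a |v 0| (2*a*M + |w 0|) hapos (abs_nonneg _) ?_
    · exact abs_eq_zero.mp this
    intro t htpos
    have h1 := hvw t
    rw [hvsol t, hwsol t] at h1
    have h2 : v 0 * Real.exp (a * t) = 2 * a * z t + w 0 * Real.exp (-a * t) := by
      linarith
    have h3 : |v 0 * Real.exp (a * t)| ≤ |2 * a * z t| + |w 0 * Real.exp (-a * t)| := by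
      rw [h2]; exact abs_add_le _ _
    rw [abs_mul (v 0), abs_of_pos (Real.exp_pos (a*t)), abs_mul (2*a) (z t),
      abs_mul (w 0), abs_of_pos (Real.exp_pos (-a*t))] at h3
    have h4 : |2 * a| * |z t| ≤ 2 * a * M := by
      rw [abs_of_pos (by linarith : (0:ℝ) < 2 * a)]
      exact mul_le_mul_of_nonneg_left (hzb t) (by linarith)
    have h5 : Real.exp (-a * t) ≤ 1 := by
      rw [Real.exp_le_one_iff]
      nlinarith
    nlinarith [abs_nonneg (w 0), Real.exp_pos (-a*t)]
  have hw0 : w 0 = 0 := by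
    have := exp_growth_zero a |w 0| (2*a*M + |v 0|) hapos (abs_nonneg _) ?_
    · exact abs_eq_zero.mp this
    intro t htpos
    have h1 := hvw (-t)
    rw [hvsol (-t), hwsol (-t)] at h1
    have hea : a * -t = -a * t := by ring
    have heb : -a * -t = a * t := by ring
    rw [hea, heb] at h1
    have h2 : w 0 * Real.exp (a * t) = -(2 * a * z (-t)) + v 0 * Real.exp (-a * t) := by
      linarith
    have h3 : |w 0 * Real.exp (a * t)| ≤ |2 * a * z (-t)| + |v 0 * Real.exp (-a * t)| := by
      rw [h2]
      calc |-(2 * a * z (-t)) + v 0 * Real.exp (-a * t)|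
          ≤ |-(2 * a * z (-t))| + |v 0 * Real.exp (-a * t)| := abs_add_le _ _
        _ = |2 * a * z (-t)| + |v 0 * Real.exp (-a * t)| := by rw [abs_neg]
    rw [abs_mul (w 0), abs_of_pos (Real.exp_pos (a*t)), abs_mul (2*a) (z (-t)),
      abs_mul (v 0), abs_of_pos (Real.exp_pos (-a*t))] at h3
    have h4 : |2 * a| * |z (-t)| ≤ 2 * a * M := by
      rw [abs_of_pos (by linarith : (0:ℝ) < 2 * a)]
      exact mul_le_mul_of_nonneg_left (hzb (-t)) (by linarith)
    have h5 : Real.exp (-a * t) ≤ 1 := by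
      rw [Real.exp_le_one_iff]
      nlinarith
    nlinarith [abs_nonneg (v 0), Real.exp_pos (-a*t)]
  have hvall : ∀ t, v t = 0 := by intro t; rw [hvsol t, hv0, zero_mul]
  have hwall : ∀ t, w t = 0 := by intro t; rw [hwsol t, hw0, zero_mul]
  have hθ0 : ∀ t, θ t = 0 := by
    intro t
    have hzdt : zd t = 0 := by
      have h1 := hvall t
      have h2 := hwall t
      have : zd t + a * z t = 0 := h1
      have : zd t - a * z t = 0 := h2
      linarith [hvall t, hwall t]
    have : θ t * y t = 0 := hzdt
    have hyne : y t ≠ 0 := inv_ne_zero (hφne t)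
    rcases mul_eq_zero.mp this with h | h
    · exact h
    · exact absurd h hyne
  intro t
  refine ⟨hθ0 t, ?_⟩
  have hθfun : θ = fun _ => (0:ℝ) := funext hθ0
  have hd : deriv θ t = 0 := by rw [hθfun]; simp
  have := hodeθ t
  rw [hd, hθ0 t] at this
  have : (0:ℝ) = 2 * H t + 2 * μ := by
    rw [this]; ring
  linarith
end

section
/- Let c > 0 be a real constant, and let θ, H, φ : ℝ → ℝ be differentiable functions satisfying, for every t ∈ ℝ: θ′(t) = 2H(t) − θ(t)², H′(t) = −θ(t)·H(t), φ′(t) = −θ(t)·φ(t), and |φ(t)| ≥ c. Then θ(t) = 0 and H(t) = 0 for all t ∈ ℝ. -/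
/-- A quadratic polynomial bounded on all of ℝ has zero leading and linear coefficients. -/
lemma bounded_quadratic_aux {a b k M : ℝ} (h : ∀ t : ℝ, |a + b * t + k * t ^ 2| ≤ M) :
    k = 0 ∧ b = 0 := by
  have ha : |a| ≤ M := by simpa using h 0
  have ha' := abs_le.mp ha
  have hM : 0 ≤ M := le_trans (abs_nonneg _) ha
  have hk : k = 0 := by
    by_contra hk
    have hk' : 0 < |k| := abs_pos.mpr hk
    set t := Real.sqrt ((2 * M + 1) / |k|) with ht
    have ht2 : t ^ 2 = (2 * M + 1) / |k| := Real.sq_sqrt (by positivity)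
    have h1 := abs_le.mp (h t)
    have h2 := abs_le.mp (h (-t))
    have hkt : |k * t ^ 2| ≤ 2 * M := by
      rw [abs_le]
      constructor <;> nlinarith [h1.1, h1.2, h2.1, h2.2, ha'.1, ha'.2]
    have heq : |k * t ^ 2| = 2 * M + 1 := by
      rw [abs_mul, abs_pow, sq_abs, ht2]
      field_simp
    linarith [heq ▸ hkt]
  have hb : b = 0 := by
    by_contra hb
    have hb' : 0 < |b| := abs_pos.mpr hb
    set t := (2 * M + 1) / |b| with ht
    have h1 := abs_le.mp (h t)
    rw [hk] at h1
    have hbt : |b * t| ≤ 2 * M := by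
      rw [abs_le]
      constructor <;> nlinarith [h1.1, h1.2, ha'.1, ha'.2]
    have heq : |b * t| = 2 * M + 1 := by
      rw [abs_mul, ht, abs_div, abs_abs]
      rw [abs_of_nonneg (by linarith : (0:ℝ) ≤ 2 * M + 1)]
      field_simp
    linarith [heq ▸ hbt]
  exact ⟨hk, hb⟩

/-- For `c > 0`, if `θ, H, φ : ℝ → ℝ` are differentiable and satisfy
`θ' = 2H - θ²`, `H' = -θH`, `φ' = -θφ`, and `|φ| ≥ c` everywhere, then `θ ≡ 0` and
`H ≡ 0`. -/
theorem ode_system_mu_zero (c : ℝ) (hc : 0 < c)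
    (θ H φ : ℝ → ℝ)
    (hθ : Differentiable ℝ θ) (hH : Differentiable ℝ H) (hφ : Differentiable ℝ φ)
    (hodeθ : ∀ t : ℝ, deriv θ t = 2 * H t - (θ t) ^ 2)
    (hodeH : ∀ t : ℝ, deriv H t = -(θ t) * H t)
    (hodeφ : ∀ t : ℝ, deriv φ t = -(θ t) * φ t)
    (hφc : ∀ t : ℝ, c ≤ |φ t|) :
    ∀ t : ℝ, θ t = 0 ∧ H t = 0 := by
  have hφne : ∀ t, φ t ≠ 0 := by
    intro t h
    have := hφc t
    rw [h, abs_zero] at this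
    linarith
  set ρ : ℝ → ℝ := fun t => (φ t)⁻¹ with hρdef
  have hρne : ∀ t, ρ t ≠ 0 := fun t => inv_ne_zero (hφne t)
  have hρ : Differentiable ℝ ρ := hφ.inv hφne
  -- ρ' = θ ρ
  have hρd : ∀ t, deriv ρ t = θ t * ρ t := by
    intro t
    have h1 : HasDerivAt ρ (-deriv φ t / (φ t) ^ 2) t := ((hφ t).hasDerivAt).inv (hφne t)
    rw [h1.deriv, hodeφ t]
    simp only [hρdef]
    field_simp [hφne t]

  -- H ρ is constant, call its value k
  set k : ℝ := H 0 * ρ 0 with hk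
  have hg : ∀ t, H t * ρ t = k := by
    intro t
    have hder : ∀ x, deriv (fun s => H s * ρ s) x = 0 := by
      intro x
      have h1 : HasDerivAt (fun s => H s * ρ s) (deriv H x * ρ x + H x * deriv ρ x) x :=
        ((hH x).hasDerivAt).mul ((hρ x).hasDerivAt)
      rw [h1.deriv, hodeH x, hρd x]
      ring
    exact is_const_of_deriv_eq_zero (hH.mul hρ) hder t 0
  -- D = ρ' = θ ρ has derivative 2k everywhere
  set D : ℝ → ℝ := fun t => θ t * ρ t with hD
  have hDdiff : Differentiable ℝ D := hθ.mul hρ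
  have hD2 : ∀ t, HasDerivAt D (2 * k) t := by
    intro t
    have h1 : HasDerivAt D (deriv θ t * ρ t + θ t * deriv ρ t) t :=
      ((hθ t).hasDerivAt).mul ((hρ t).hasDerivAt)
    have heq : deriv θ t * ρ t + θ t * deriv ρ t = 2 * k := by
      rw [hodeθ t, hρd t]
      linear_combination 2 * hg t
    rwa [heq] at h1
  -- hence D t = D 0 + 2 k t
  set b : ℝ := D 0 with hb
  have hDlin : ∀ t, D t = b + 2 * k * t := by
    intro t
    set F : ℝ → ℝ := fun t => D t - 2 * k * t with hF
    have hFd : ∀ x, deriv F x = 0 := by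
      intro x
      have h1 : HasDerivAt F (2 * k - 2 * k * 1) x :=
        (hD2 x).sub ((hasDerivAt_id x).const_mul (2 * k))
      simpa using h1.deriv
    have hFdiff : Differentiable ℝ F := hDdiff.sub (differentiable_id.const_mul _)
    have := is_const_of_deriv_eq_zero hFdiff hFd t 0
    simp only [hF] at this
    linarith [this]
  -- hence ρ t = ρ 0 + b t + k t²
  set a : ℝ := ρ 0 with ha
  have hρpoly : ∀ t, ρ t = a + b * t + k * t ^ 2 := by
    intro t
    set G : ℝ → ℝ := fun t => ρ t - (b * t + k * t ^ 2) with hG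
    have hGd : ∀ x, deriv G x = 0 := by
      intro x
      have hρx : HasDerivAt ρ (D x) x := by
        have := (hρ x).hasDerivAt
        rwa [hρd x] at this
      have hpoly : HasDerivAt (fun t : ℝ => b * t + k * t ^ 2)
          (b * 1 + k * (2 * x ^ 1)) x :=
        ((hasDerivAt_id x).const_mul b).add ((hasDerivAt_pow 2 x).const_mul k)
      have h1 : HasDerivAt G (D x - (b * 1 + k * (2 * x ^ 1))) x := hρx.sub hpoly
      have heq : D x - (b * 1 + k * (2 * x ^ 1)) = 0 := by
        rw [hDlin x]; ring
      rw [heq] at h1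
      exact h1.deriv
    have hGdiff : Differentiable ℝ G := by
      apply hρ.sub
      apply Differentiable.add
      · exact differentiable_id.const_mul _
      · exact (differentiable_pow 2).const_mul _
    have := is_const_of_deriv_eq_zero hGdiff hGd t 0
    simp only [hG] at this
    have h0 : G 0 = a := by simp [hG, ha]
    have ht : G t = ρ t - (b * t + k * t ^ 2) := rfl
    nlinarith [this]
  -- boundedness: |ρ t| ≤ c⁻¹
  have hbound : ∀ t, |a + b * t + k * t ^ 2| ≤ c⁻¹ := by
    intro t
    rw [← hρpoly t, hρdef]
    simp only [abs_inv]
    exact inv_anti₀ hc (hφc t)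
  obtain ⟨hk0, hb0⟩ := bounded_quadratic_aux hbound
  intro t
  constructor
  · have h1 : θ t * ρ t = 0 := by
      have := hDlin t
      simp only [hD] at this
      rw [hb0, hk0] at this
      linarith
    exact (mul_eq_zero.mp h1).resolve_right (hρne t)
  · have h1 : H t * ρ t = 0 := by
      rw [hg t]; exact hk0
    exact (mul_eq_zero.mp h1).resolve_right (hρne t)
end
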